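/- Let β ≥ 0, ε ∈ [0,1), and let v : [0,1] → ℝ. Suppose there exist y̲, ȳ ∈ [0,1] with y̲ ≤ ȳ such that y ↦ v(y) − ln(1+βy) is strictly increasing on [0,y̲] and strictly decreasing on [y̲,1], and y ↦ v(y) − ln(1−εy) is strictly increasing on [0,ȳ] and strictly decreasing on [ȳ,1]. For x ∈ [0,1] define G_x : [0,1] → ℝ by G_x(y) := v(y) − ln((1+βy)/(1+βx))·1_{x<y} − ln((1−εy)/(1−εx))·1_{x>y}. Then for every x ∈ [0,1], G_x attains its maximum over [0,1] at exactly one point, namely at ŷ(x) := y̲ if x < y̲, ŷ(x) := x if y̲ ≤ x ≤ ȳ, and ŷ(x) := ȳ if x > ȳ; i.e., the set of maximizers of G_x on [0,1] is the singleton { ŷ(x) }. -/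

import Mathlib

/-!
Away from `x`, `G_x` is a translate of the buying objective `v y - log (1 + β y)` on `[x, 1]`
and of the selling objective `v y - log (1 - ε y)` on `[0, x]`. Each objective is unimodal, so
`G_x` has a strict maximum on `[x, 1]` at `max x y̲` and on `[0, x]` at `min x ȳ`.
Since `y̲ ≤ ȳ`, at least one of these two points is `x` itself, which lies in both pieces,
and the other one (if different) beats it: the global strict maximum is the clamp of `x`
onto `[y̲, ȳ]`.
-/

open Set

/-- The net value `G_x(y)` of rebalancing the wealth fraction in the stock from `x`
to `y`, accounting for proportional transaction costs. -/
noncomputable def rebalanceGain (β ε : ℝ) (v : ℝ → ℝ) (x y : ℝ) : ℝ :=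
  v y - Real.log ((1 + β * y) / (1 + β * x)) * (if x < y then 1 else 0)
      - Real.log ((1 - ε * y) / (1 - ε * x)) * (if y < x then 1 else 0)

section Unimodal

variable {α γ : Type*} [LinearOrder α] [Preorder γ] {f : α → γ} {a b c m z : α}

theorem lt_of_strictMonoOn_of_strictAntiOn (hmono : StrictMonoOn f (Icc a m))
    (hanti : StrictAntiOn f (Icc m b)) (hz : z ∈ Icc a b) (hne : z ≠ m) : f z < f m := by
  rcases hne.lt_or_gt with hzm | hmz
  · exact hmono ⟨hz.1, hzm.le⟩ ⟨hz.1.trans hzm.le, le_rfl⟩ hzm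
  · exact hanti ⟨le_rfl, hmz.le.trans hz.2⟩ ⟨hmz.le, hz.2⟩ hmz

theorem lt_max_of_strictMonoOn_of_strictAntiOn (hmono : StrictMonoOn f (Icc a m))
    (hanti : StrictAntiOn f (Icc m b)) (hac : a ≤ c) (hz : z ∈ Icc c b) (hne : z ≠ max c m) :
    f z < f (max c m) := by
  rcases le_total m c with hmc | hcm
  · rw [max_eq_left hmc] at hne ⊢
    have hcz : c < z := lt_of_le_of_ne hz.1 hne.symm
    exact hanti ⟨hmc, hcz.le.trans hz.2⟩ ⟨hmc.trans hcz.le, hz.2⟩ hcz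
  · rw [max_eq_right hcm] at hne ⊢
    exact lt_of_strictMonoOn_of_strictAntiOn hmono hanti ⟨hac.trans hz.1, hz.2⟩ hne

theorem lt_min_of_strictMonoOn_of_strictAntiOn (hmono : StrictMonoOn f (Icc a m))
    (hanti : StrictAntiOn f (Icc m b)) (hcb : c ≤ b) (hz : z ∈ Icc a c) (hne : z ≠ min c m) :
    f z < f (min c m) := by
  rcases le_total c m with hcm | hmc
  · rw [min_eq_left hcm] at hne ⊢
    have hzc : z < c := lt_of_le_of_ne hz.2 hne
    exact hmono ⟨hz.1, hzc.le.trans hcm⟩ ⟨hz.1.trans hzc.le, hcm⟩ hzc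
  · rw [min_eq_right hmc] at hne ⊢
    exact lt_of_strictMonoOn_of_strictAntiOn hmono hanti ⟨hz.1, hz.2.trans hcb⟩ hne

end Unimodal

theorem setOf_forall_le_eq_singleton {α γ : Type*} [Preorder γ] {f : α → γ} {s : Set α}
    {w : α} (hw : w ∈ s) (hlt : ∀ z ∈ s, z ≠ w → f z < f w) :
    {y | y ∈ s ∧ ∀ z ∈ s, f z ≤ f y} = {w} := by
  ext y
  refine ⟨fun ⟨hy, hmax⟩ => ?_, fun hyw => ?_⟩
  · by_contra hne
    exact (hlt y hy hne).not_ge (hmax w hw)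
  · rw [mem_singleton_iff.1 hyw]
    exact ⟨hw, fun z hz => (eq_or_ne z w).elim (fun h => h ▸ le_rfl) fun h => (hlt z hz h).le⟩

section Rebalance

variable {β ε : ℝ} {v : ℝ → ℝ} {x y z yl yu : ℝ}

theorem rebalanceGain_of_le (hβ : 0 ≤ β) (hx : 0 ≤ x) (hxy : x ≤ y) :
    rebalanceGain β ε v x y = v y - Real.log (1 + β * y) + Real.log (1 + β * x) := by
  rcases hxy.eq_or_lt with rfl | hxy
  · simp [rebalanceGain]
  have hpx : 0 < 1 + β * x := by positivity
  have hpy : 0 < 1 + β * y := by nlinarith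
  rw [rebalanceGain, if_pos hxy, if_neg hxy.not_gt, Real.log_div hpy.ne' hpx.ne']
  ring

theorem rebalanceGain_of_ge (hε0 : 0 ≤ ε) (hε1 : ε < 1) (hx : x ≤ 1) (hyx : y ≤ x) :
    rebalanceGain β ε v x y = v y - Real.log (1 - ε * y) + Real.log (1 - ε * x) := by
  rcases hyx.eq_or_lt with rfl | hyx
  · simp [rebalanceGain]
  have hpx : 0 < 1 - ε * x := by nlinarith
  have hpy : 0 < 1 - ε * y := by nlinarith
  rw [rebalanceGain, if_neg hyx.not_gt, if_pos hyx, Real.log_div hpy.ne' hpx.ne']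
  ring

theorem rebalanceGain_lt_max (hβ : 0 ≤ β)
    (hmono : StrictMonoOn (fun y => v y - Real.log (1 + β * y)) (Icc 0 yl))
    (hanti : StrictAntiOn (fun y => v y - Real.log (1 + β * y)) (Icc yl 1))
    (hx : 0 ≤ x) (hz : z ∈ Icc x 1) (hne : z ≠ max x yl) :
    rebalanceGain β ε v x z < rebalanceGain β ε v x (max x yl) := by
  rw [rebalanceGain_of_le hβ hx hz.1, rebalanceGain_of_le hβ hx (le_max_left x yl)]
  exact add_lt_add_left (lt_max_of_strictMonoOn_of_strictAntiOn hmono hanti hx hz hne) _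

theorem rebalanceGain_lt_min (hε0 : 0 ≤ ε) (hε1 : ε < 1)
    (hmono : StrictMonoOn (fun y => v y - Real.log (1 - ε * y)) (Icc 0 yu))
    (hanti : StrictAntiOn (fun y => v y - Real.log (1 - ε * y)) (Icc yu 1))
    (hx : x ≤ 1) (hz : z ∈ Icc 0 x) (hne : z ≠ min x yu) :
    rebalanceGain β ε v x z < rebalanceGain β ε v x (min x yu) := by
  rw [rebalanceGain_of_ge hε0 hε1 hx hz.2, rebalanceGain_of_ge hε0 hε1 hx (min_le_left x yu)]
  exact add_lt_add_left (lt_min_of_strictMonoOn_of_strictAntiOn hmono hanti hx hz hne) _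

end Rebalance

theorem optimal_rebalance_unique (β ε : ℝ) (hβ : 0 ≤ β) (hε0 : 0 ≤ ε) (hε1 : ε < 1)
    (v : ℝ → ℝ) (yl yu : ℝ)
    (hyl : yl ∈ Icc (0:ℝ) 1) (hyu : yu ∈ Icc (0:ℝ) 1) (hle : yl ≤ yu)
    (hmono₁ : StrictMonoOn (fun y => v y - Real.log (1 + β * y)) (Icc 0 yl))
    (hanti₁ : StrictAntiOn (fun y => v y - Real.log (1 + β * y)) (Icc yl 1))
    (hmono₂ : StrictMonoOn (fun y => v y - Real.log (1 - ε * y)) (Icc 0 yu))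
    (hanti₂ : StrictAntiOn (fun y => v y - Real.log (1 - ε * y)) (Icc yu 1)) :
    ∀ x ∈ Icc (0:ℝ) 1,
      {y | y ∈ Icc (0:ℝ) 1 ∧ ∀ z ∈ Icc (0:ℝ) 1,
          rebalanceGain β ε v x z ≤ rebalanceGain β ε v x y}
        = {if x < yl then yl else if x ≤ yu then x else yu} := by
  intro x hx
  have hbuy := fun z => rebalanceGain_lt_max (ε := ε) (z := z) hβ hmono₁ hanti₁ hx.1
  have hsell := fun z => rebalanceGain_lt_min (β := β) (z := z) hε0 hε1 hmono₂ hanti₂ hx.2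
  split_ifs with hxl hxu <;> refine setOf_forall_le_eq_singleton (by assumption) fun z hz hne => ?_
  · rw [max_eq_right hxl.le] at hbuy
    rw [min_eq_left (hxl.le.trans hle)] at hsell
    rcases le_or_gt x z with hxz | hzx
    · exact hbuy z ⟨hxz, hz.2⟩ hne
    · exact (hsell z ⟨hz.1, hzx.le⟩ hzx.ne).trans (hbuy x ⟨le_rfl, hx.2⟩ hxl.ne)
  · rw [max_eq_left (not_lt.1 hxl)] at hbuy
    rw [min_eq_left hxu] at hsell
    rcases le_or_gt x z with hxz | hzx
    · exact hbuy z ⟨hxz, hz.2⟩ hne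
    · exact hsell z ⟨hz.1, hzx.le⟩ hne
  · rw [max_eq_left (hle.trans (not_le.1 hxu).le)] at hbuy
    rw [min_eq_right (not_le.1 hxu).le] at hsell
    rcases le_or_gt z x with hzx | hxz
    · exact hsell z ⟨hz.1, hzx⟩ hne
    · exact (hbuy z ⟨hxz.le, hz.2⟩ hxz.ne').trans
        (hsell x ⟨hx.1, le_rfl⟩ (not_le.1 hxu).ne')
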